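/- arXiv:2301.08369 — 7 statements merged into one kernel-verified Lean document; each statement's English description precedes it below -/
import Mathlib

section
/- Let G be a finite simple graph on n vertices and let λ be an eigenvalue of L(G) with λ ≠ 0 and λ < n. Then every eigenvector x of L(G) for λ satisfies x_v = 0 for every vertex v of degree n − 1 (i.e., every vertex adjacent to all other vertices). -/
open Matrix

/-- The Laplacian matrix of a finite simple graph: degree on the diagonal,
`-1` at entries corresponding to edges, `0` elsewhere. -/
def lap {V : Type*} [Fintype V] [DecidableEq V] (G : SimpleGraph V) [DecidableRel G.Adj] :
    Matrix V V ℝ :=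
  Matrix.of fun v w => if v = w then (G.degree v : ℝ) else if G.Adj v w then -1 else 0

lemma lap_col_sum {V : Type*} [Fintype V] [DecidableEq V] (G : SimpleGraph V)
    [DecidableRel G.Adj] (u : V) : ∑ w, lap G w u = 0 := by
  classical
  have hterm : ∀ w, lap G w u =
      (if w = u then (G.degree u : ℝ) else 0) +
      (if w ∈ G.neighborFinset u then (-1 : ℝ) else 0) := by
    intro w
    by_cases h : w = u
    · subst h
      simp [lap, SimpleGraph.mem_neighborFinset]
    · simp [lap, h, SimpleGraph.mem_neighborFinset, G.adj_comm]
  simp only [hterm, Finset.sum_add_distrib]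
  rw [Finset.sum_ite_eq' Finset.univ u (fun _ => (G.degree u : ℝ))]
  rw [Finset.sum_ite_mem, Finset.univ_inter, Finset.sum_const]
  simp [SimpleGraph.card_neighborFinset_eq_degree]

/-- If `λ ≠ 0` is an eigenvalue of `L(G)` with `λ < n`, then every eigenvector for `λ`
vanishes on every vertex of degree `n - 1`. -/
theorem eigenvector_zero_on_dominating_vertex {V : Type*} [Fintype V] [DecidableEq V]
    (G : SimpleGraph V) [DecidableRel G.Adj] (μ : ℝ) (hμ : μ ≠ 0)
    (hμn : μ < (Fintype.card V : ℝ)) (x : V → ℝ) (hx : x ≠ 0)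
    (heig : lap G *ᵥ x = μ • x) (v : V) (hv : G.degree v = Fintype.card V - 1) :
    x v = 0 := by
  classical
  have hn : 1 ≤ Fintype.card V := Fintype.card_pos_iff.mpr ⟨v⟩
  -- sum of x is zero
  have hsum : ∑ u, x u = 0 := by
    have h1 : ∑ w, (lap G *ᵥ x) w = ∑ w, (μ • x) w := by rw [heig]
    have h2 : ∑ w, (lap G *ᵥ x) w = 0 := by
      calc ∑ w, (lap G *ᵥ x) w = ∑ w, ∑ u, lap G w u * x u := rfl
        _ = ∑ u, ∑ w, lap G w u * x u := Finset.sum_comm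
        _ = ∑ u, (∑ w, lap G w u) * x u := by
            simp [Finset.sum_mul]
        _ = 0 := by simp [lap_col_sum]
    have h3 : μ * ∑ u, x u = 0 := by
      rw [Finset.mul_sum]
      simp only [Pi.smul_apply, smul_eq_mul] at h1
      rw [← h1, h2]
    exact (mul_eq_zero.mp h3).resolve_left hμ
  -- v is adjacent to all other vertices
  have hadj : ∀ w, w ≠ v → G.Adj v w := by
    intro w hw
    have hsub : G.neighborFinset v ⊆ Finset.univ.erase v := by
      intro u hu
      exact Finset.mem_erase.mpr ⟨(G.ne_of_adj ((G.mem_neighborFinset v u).mp hu).symm),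
        Finset.mem_univ u⟩
    have hcard : (Finset.univ.erase v).card ≤ (G.neighborFinset v).card := by
      rw [SimpleGraph.card_neighborFinset_eq_degree, hv,
        Finset.card_erase_of_mem (Finset.mem_univ v), Finset.card_univ]
    have heq := Finset.eq_of_subset_of_card_le hsub hcard
    have : w ∈ G.neighborFinset v := by
      rw [heq]; exact Finset.mem_erase.mpr ⟨hw, Finset.mem_univ w⟩
    exact (G.mem_neighborFinset v w).mp this
  -- compute row v
  have hrow : (lap G *ᵥ x) v = (G.degree v : ℝ) * x v + ∑ w ∈ Finset.univ.erase v, (-1) * x w := by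
    have : (lap G *ᵥ x) v = ∑ w, lap G v w * x w := rfl
    rw [this, ← Finset.add_sum_erase _ _ (Finset.mem_univ v)]
    congr 1
    · simp [lap]
    · apply Finset.sum_congr rfl
      intro w hw
      have hwv : w ≠ v := Finset.ne_of_mem_erase hw
      simp [lap, (hwv.symm : v ≠ w), hadj w hwv]
  have herase : ∑ w ∈ Finset.univ.erase v, x w = -x v := by
    have := Finset.add_sum_erase Finset.univ x (Finset.mem_univ v)
    rw [hsum] at this
    linarith
  have hdeg : (G.degree v : ℝ) = (Fintype.card V : ℝ) - 1 := by
    rw [hv, Nat.cast_sub hn, Nat.cast_one]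
  have hveq : (lap G *ᵥ x) v = μ * x v := by
    rw [heig]; simp
  rw [hrow] at hveq
  simp only [neg_one_mul, Finset.sum_neg_distrib, herase, hdeg] at hveq
  have hfinal : ((Fintype.card V : ℝ) - μ) * x v = 0 := by ring_nf; ring_nf at hveq; linarith
  rcases mul_eq_zero.mp hfinal with h | h
  · linarith
  · exact h
end

section
/- (Link) Let x be an eigenvector of L(G) for an eigenvalue λ, and let i ≠ j be vertices of G with x_i = x_j. Let G' be the graph obtained from G by deleting the edge ij if it is present, or adding it if it is absent. Then x is an eigenvector of L(G') for the same eigenvalue λ. -/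
open Matrix

lemma lap_mulVec_apply {V : Type*} [Fintype V] [DecidableEq V] (G : SimpleGraph V)
    [DecidableRel G.Adj] (x : V → ℝ) (v : V) :
    (lap G *ᵥ x) v = ∑ w, if G.Adj v w then x v - x w else 0 := by
  have hdeg : (G.degree v : ℝ) = ∑ w, if G.Adj v w then (1 : ℝ) else 0 := by
    rw [SimpleGraph.degree, SimpleGraph.neighborFinset_eq_filter, Finset.card_filter]
    push_cast
    rfl
  have hpt : ∀ w, (if v = w then (G.degree v : ℝ) else if G.Adj v w then -1 else 0) * x w
      = (if v = w then (G.degree v : ℝ) * x v else 0) + (if G.Adj v w then -x w else 0) := by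
    intro w
    by_cases h : v = w
    · subst h; simp [G.irrefl]
    · rw [if_neg h]; split_ifs <;> ring
  simp only [mulVec, dotProduct, lap, Matrix.of_apply, hpt, Finset.sum_add_distrib,
    Finset.sum_ite_eq Finset.univ v, Finset.mem_univ, if_true]
  have : ∀ w, (if G.Adj v w then x v - x w else 0)
      = (if G.Adj v w then (1:ℝ) else 0) * x v + (if G.Adj v w then -x w else 0) := by
    intro w; split_ifs <;> ring
  simp only [this, Finset.sum_add_distrib, ← Finset.sum_mul, ← hdeg]

/-- (Link) If `x` is an eigenvector of `L(G)` for `λ` and `x i = x j` for `i ≠ j`, then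
`x` is an eigenvector for `λ` of the graph `G'` obtained from `G` by toggling (deleting
if present, adding if absent) the edge `ij`. -/
theorem link_preserves_eigenvalue {V : Type*} [Fintype V] [DecidableEq V]
    (G G' : SimpleGraph V) [DecidableRel G.Adj] [DecidableRel G'.Adj]
    (μ : ℝ) (x : V → ℝ) (hx : x ≠ 0) (heig : lap G *ᵥ x = μ • x)
    (i j : V) (hij : i ≠ j) (hxij : x i = x j)
    (hG' : ∀ a b, G'.Adj a b ↔ (if s(a, b) = s(i, j) then ¬ G.Adj a b else G.Adj a b)) :
    lap G' *ᵥ x = μ • x := by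
  rw [← heig]
  funext v
  rw [lap_mulVec_apply, lap_mulVec_apply]
  refine Finset.sum_congr rfl fun w _ => ?_
  by_cases h : s(v, w) = s(i, j)
  · have hx0 : x v - x w = 0 := by
      rw [Sym2.eq_iff] at h
      rcases h with ⟨rfl, rfl⟩ | ⟨rfl, rfl⟩ <;> simp [hxij]
    simp [hx0]
  · have hadj : G'.Adj v w ↔ G.Adj v w := by rw [hG' v w, if_neg h]
    simp only [hadj]
end

section
/- Let G₁ and G₂ be finite simple graphs on disjoint vertex sets V₁ and V₂, let x¹ be an eigenvector of L(G₁) for λ and x² an eigenvector of L(G₂) for the same λ, and let i ∈ V₁, j ∈ V₂ be vertices such that x¹_i ≠ 0 or x²_j ≠ 0. Let G be the graph on V₁ ∪ V₂ whose edge set is E(G₁) ∪ E(G₂) together with the single edge ij. Then the vector y on V₁ ∪ V₂ defined by y_v = x²_j · x¹_v for v ∈ V₁ and y_v = x¹_i · x²_v for v ∈ V₂ is an eigenvector of L(G) for λ. -/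
open Matrix

lemma lap_mulVec_eq {V : Type*} [Fintype V] [DecidableEq V] (G : SimpleGraph V)
    [DecidableRel G.Adj] (x : V → ℝ) (u : V) :
    (lap G *ᵥ x) u = ∑ w, if G.Adj u w then x u - x w else 0 := by
  classical
  have hdeg : (G.degree u : ℝ) * x u = ∑ w, if G.Adj u w then x u else 0 := by
    rw [Finset.sum_ite, Finset.sum_const_zero, add_zero, Finset.sum_const, nsmul_eq_mul,
      ← SimpleGraph.neighborFinset_eq_filter]
    rfl
  have h1 : ∀ w, (if u = w then (G.degree u : ℝ) else if G.Adj u w then -1 else 0) * x w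
      = (if u = w then (G.degree u : ℝ) * x u else 0) + (if G.Adj u w then -(x w) else 0) := by
    intro w
    by_cases h : u = w
    · subst h; simp [G.irrefl]
    · simp only [h, if_false]
      split <;> ring
  simp only [lap, mulVec, dotProduct, of_apply, h1, Finset.sum_add_distrib,
    Finset.sum_ite_eq, Finset.mem_univ, if_true]
  rw [hdeg, ← Finset.sum_add_distrib]
  refine Finset.sum_congr rfl fun w _ => ?_
  split <;> ring

/-- Joining two graphs with a common eigenvalue `λ` by a single edge `ij` with
`x¹ i ≠ 0` or `x² j ≠ 0` yields a graph with eigenvalue `λ` and eigenvector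
`y = x² j • (x¹, 0) + x¹ i • (0, x²)`. -/
theorem link_two_graphs {V₁ V₂ : Type*} [Fintype V₁] [DecidableEq V₁]
    [Fintype V₂] [DecidableEq V₂]
    (G₁ : SimpleGraph V₁) [DecidableRel G₁.Adj] (G₂ : SimpleGraph V₂) [DecidableRel G₂.Adj]
    (lam : ℝ) (x₁ : V₁ → ℝ) (x₂ : V₂ → ℝ) (hx₁ : x₁ ≠ 0) (hx₂ : x₂ ≠ 0)
    (h₁ : lap G₁ *ᵥ x₁ = lam • x₁) (h₂ : lap G₂ *ᵥ x₂ = lam • x₂)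
    (i : V₁) (j : V₂) (hnz : x₁ i ≠ 0 ∨ x₂ j ≠ 0)
    (G : SimpleGraph (V₁ ⊕ V₂)) [DecidableRel G.Adj]
    (hll : ∀ a b, G.Adj (Sum.inl a) (Sum.inl b) ↔ G₁.Adj a b)
    (hrr : ∀ a b, G.Adj (Sum.inr a) (Sum.inr b) ↔ G₂.Adj a b)
    (hlr : ∀ a b, G.Adj (Sum.inl a) (Sum.inr b) ↔ (a = i ∧ b = j)) :
    Sum.elim (fun v => x₂ j * x₁ v) (fun v => x₁ i * x₂ v) ≠ 0 ∧
      lap G *ᵥ Sum.elim (fun v => x₂ j * x₁ v) (fun v => x₁ i * x₂ v) =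
        lam • Sum.elim (fun v => x₂ j * x₁ v) (fun v => x₁ i * x₂ v) := by
  have hrl : ∀ a b, G.Adj (Sum.inr b) (Sum.inl a) ↔ (a = i ∧ b = j) := fun a b => by
    rw [G.adj_comm]; exact hlr a b
  constructor
  · intro h0
    rcases hnz with h | h
    · refine hx₂ (funext fun v => ?_)
      have hv := congrFun h0 (Sum.inr v)
      simp only [Sum.elim_inr, Pi.zero_apply] at hv ⊢
      rcases mul_eq_zero.mp hv with h' | h'
      · exact absurd h' h
      · exact h'
    · refine hx₁ (funext fun v => ?_)
      have hv := congrFun h0 (Sum.inl v)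
      simp only [Sum.elim_inl, Pi.zero_apply] at hv ⊢
      rcases mul_eq_zero.mp hv with h' | h'
      · exact absurd h' h
      · exact h'
  · funext u
    cases u with
    | inl a =>
      have key : (lap G₁ *ᵥ x₁) a = lam * x₁ a := by rw [h₁]; rfl
      rw [lap_mulVec_eq, Fintype.sum_sum_type]
      simp only [Sum.elim_inl, Sum.elim_inr, hll, hlr]
      have hsum1 : (∑ b, if G₁.Adj a b then x₂ j * x₁ a - x₂ j * x₁ b else 0)
          = x₂ j * ∑ b, (if G₁.Adj a b then x₁ a - x₁ b else 0) := by
        rw [Finset.mul_sum]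
        exact Finset.sum_congr rfl fun b _ => by split <;> ring
      have hsum2 : (∑ c, if a = i ∧ c = j then x₂ j * x₁ a - x₁ i * x₂ c else 0) = 0 := by
        by_cases h : a = i
        · subst h
          simp only [true_and]
          rw [Finset.sum_ite_eq' Finset.univ j]
          simp only [Finset.mem_univ, if_true]
          ring
        · simp [h]
      rw [hsum1, hsum2, ← lap_mulVec_eq, key, add_zero]
      simp only [Pi.smul_apply, Sum.elim_inl, smul_eq_mul]
      ring
    | inr c =>
      have key : (lap G₂ *ᵥ x₂) c = lam * x₂ c := by rw [h₂]; rfl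
      rw [lap_mulVec_eq, Fintype.sum_sum_type]
      simp only [Sum.elim_inl, Sum.elim_inr, hrr, hrl]
      have hsum1 : (∑ b, if G₂.Adj c b then x₁ i * x₂ c - x₁ i * x₂ b else 0)
          = x₁ i * ∑ b, (if G₂.Adj c b then x₂ c - x₂ b else 0) := by
        rw [Finset.mul_sum]
        exact Finset.sum_congr rfl fun b _ => by split <;> ring
      have hsum2 : (∑ b, if b = i ∧ c = j then x₁ i * x₂ c - x₂ j * x₁ b else 0) = 0 := by
        by_cases h : c = j
        · subst h
          simp only [and_true]
          rw [Finset.sum_ite_eq' Finset.univ i]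
          simp only [Finset.mem_univ, if_true]
          ring
        · simp [h]
      rw [hsum1, hsum2, ← lap_mulVec_eq, key, zero_add]
      simp only [Pi.smul_apply, Sum.elim_inr, smul_eq_mul]
      ring
end

section
/- (Articulation) Let G be a finite simple graph, λ an eigenvalue of L(G), and x an eigenvector of L(G) for λ with x_i = 0 for some vertex i. Let G' be the graph obtained from G by adding one new vertex u and the single edge iu. Then the vector x' that agrees with x on the vertices of G and has x'_u = 0 is an eigenvector of L(G') for the same eigenvalue λ. -/
open Matrix

lemma degree_eq_sum {V : Type*} [Fintype V] [DecidableEq V] (G : SimpleGraph V)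
    [DecidableRel G.Adj] (v : V) :
    (G.degree v : ℝ) = ∑ w, if G.Adj v w then (1 : ℝ) else 0 := by
  rw [SimpleGraph.degree, SimpleGraph.neighborFinset_eq_filter, Finset.card_filter]
  push_cast
  simp

lemma lap_mulVec {V : Type*} [Fintype V] [DecidableEq V] (G : SimpleGraph V)
    [DecidableRel G.Adj] (x : V → ℝ) (v : V) :
    (lap G *ᵥ x) v = (G.degree v : ℝ) * x v - ∑ w, if G.Adj v w then x w else 0 := by
  simp only [lap, mulVec, dotProduct, Matrix.of_apply]
  rw [eq_sub_iff_add_eq, ← Finset.sum_add_distrib]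
  have : ∀ w, (if v = w then (G.degree v : ℝ) else if G.Adj v w then -1 else 0) * x w
      + (if G.Adj v w then x w else 0)
      = (if v = w then (G.degree v : ℝ) * x w else 0) := by
    intro w
    by_cases h : v = w
    · subst h; simp [G.irrefl]
    · by_cases ha : G.Adj v w <;> simp [h, ha]
  rw [Finset.sum_congr rfl fun w _ => this w]
  simp

/-- (Articulation) Attaching a new pendant vertex (with eigenvector value `0`)
to a soft node `i` of an eigenvector `x` preserves the eigenvalue. -/
theorem articulation_preserves_eigenvalue {V : Type*} [Fintype V] [DecidableEq V]
    (G : SimpleGraph V) [DecidableRel G.Adj] (lam : ℝ) (x : V → ℝ) (hx : x ≠ 0)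
    (heig : lap G *ᵥ x = lam • x) (i : V) (hxi : x i = 0)
    (G' : SimpleGraph (V ⊕ Unit)) [DecidableRel G'.Adj]
    (hll : ∀ a b, G'.Adj (Sum.inl a) (Sum.inl b) ↔ G.Adj a b)
    (hlr : ∀ a u, G'.Adj (Sum.inl a) (Sum.inr u) ↔ a = i) :
    Sum.elim x (0 : Unit → ℝ) ≠ 0 ∧
      lap G' *ᵥ Sum.elim x (0 : Unit → ℝ) = lam • Sum.elim x (0 : Unit → ℝ) := by
  constructor
  · intro h
    apply hx
    funext v
    have := congrFun h (Sum.inl v)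
    simpa using this
  · funext w
    cases w with
    | inl v =>
      have hdeg : (G'.degree (Sum.inl v) : ℝ)
          = (G.degree v : ℝ) + (if v = i then 1 else 0) := by
        rw [degree_eq_sum, degree_eq_sum, Fintype.sum_sum_type]
        simp [hll, hlr]
      rw [lap_mulVec, hdeg, Fintype.sum_sum_type]
      have hi : (∑ u : Unit, if G'.Adj (Sum.inl v) (Sum.inr u)
          then Sum.elim x (0 : Unit → ℝ) (Sum.inr u) else 0) = 0 := by
        simp
      simp only [Sum.elim_inl, hll, hi, add_zero]
      have := congrFun heig v
      rw [lap_mulVec] at this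
      have hvi : (if v = i then (1 : ℝ) else 0) * x v = 0 := by
        by_cases h : v = i <;> simp [h, hxi]
      calc ((G.degree v : ℝ) + (if v = i then 1 else 0)) * x v
            - (∑ b, if G.Adj v b then x b else 0)
          = (G.degree v : ℝ) * x v + (if v = i then (1:ℝ) else 0) * x v
            - (∑ b, if G.Adj v b then x b else 0) := by ring
        _ = (G.degree v : ℝ) * x v - (∑ b, if G.Adj v b then x b else 0) := by
            rw [hvi, add_zero]
        _ = lam * x v := by rw [this]; simp
        _ = (lam • Sum.elim x (0 : Unit → ℝ)) (Sum.inl v) := by simp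
    | inr u =>
      rw [lap_mulVec, Fintype.sum_sum_type]
      have h1 : ∀ b, G'.Adj (Sum.inr u) (Sum.inl b) ↔ b = i := by
        intro b
        rw [SimpleGraph.adj_comm]
        exact hlr b u
      simp [h1, hxi]
end

section
/- (Inserting soft nodes) Let x be an eigenvector of L(G) for an eigenvalue λ, and suppose the support of x (the set of vertices v with x_v ≠ 0) is partitioned into disjoint pairs {i, j} with x_i = −x_j for each pair. Let k ≥ 1 and let G' be the graph obtained from G by adding, for each such pair {i, j}, k new vertices each adjacent exactly to i and to j. Then the vector x' that agrees with x on V(G) and is 0 on all new vertices is an eigenvector of L(G') for the eigenvalue λ + k. -/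
open Matrix

lemma degree_eq_sum_ite {V : Type*} [Fintype V] (G : SimpleGraph V) [DecidableRel G.Adj]
    (v : V) : G.degree v = ∑ w, if G.Adj v w then 1 else 0 := by
  rw [← SimpleGraph.card_neighborFinset_eq_degree, SimpleGraph.neighborFinset_eq_filter,
    Finset.card_filter]

lemma split_sum {V : Type*} [Fintype V] [DecidableEq V] (a : V) (d : ℝ) (c x : V → ℝ) :
    (∑ b, ((if a = b then d else 0) + c b) * x b) = d * x a + ∑ b, c b * x b := by
  simp only [add_mul, Finset.sum_add_distrib, ite_mul, zero_mul, Finset.sum_ite_eq,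
    Finset.mem_univ, if_true]

/-- (Inserting soft nodes) If the support of an eigenvector `x` is partitioned into
disjoint pairs `{f q, g q}` with `x (f q) = - x (g q) ≠ 0`, then adding `k ≥ 1` new
vertices joined exactly to both members of each pair produces a graph for which the
extension of `x` by zeros is an eigenvector for the eigenvalue `λ + k`. -/
theorem insert_soft_nodes {V P : Type*} [Fintype V] [DecidableEq V] [Fintype P] [DecidableEq P]
    (G : SimpleGraph V) [DecidableRel G.Adj] (lam : ℝ) (x : V → ℝ) (hx : x ≠ 0)
    (heig : lap G *ᵥ x = lam • x) (f g : P → V)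
    (hpair : ∀ q, x (f q) = - x (g q))
    (hne : ∀ q, x (f q) ≠ 0)
    (hcover : ∀ v, x v ≠ 0 → ∃ q, v = f q ∨ v = g q)
    (hdisj : ∀ q r, q ≠ r → f q ≠ f r ∧ f q ≠ g r ∧ g q ≠ f r ∧ g q ≠ g r)
    (k : ℕ) (hk : 1 ≤ k)
    (G' : SimpleGraph (V ⊕ P × Fin k)) [DecidableRel G'.Adj]
    (hll : ∀ a b, G'.Adj (Sum.inl a) (Sum.inl b) ↔ G.Adj a b)
    (hlr : ∀ a q m, G'.Adj (Sum.inl a) (Sum.inr (q, m)) ↔ (a = f q ∨ a = g q))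
    (hrr : ∀ u w, ¬ G'.Adj (Sum.inr u) (Sum.inr w)) :
    Sum.elim x (0 : P × Fin k → ℝ) ≠ 0 ∧
      lap G' *ᵥ Sum.elim x (0 : P × Fin k → ℝ) =
        (lam + k) • Sum.elim x (0 : P × Fin k → ℝ) := by
  classical
  have hgne : ∀ q, x (g q) ≠ 0 := by
    intro q h
    exact hne q (by rw [hpair q, h, neg_zero])
  have hfg : ∀ q, f q ≠ g q := by
    intro q h
    have h1 := hpair q
    rw [h] at h1
    exact hgne q (by linarith)
  constructor
  · intro h
    apply hx
    funext a
    have := congrFun h (Sum.inl a)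
    simpa using this
  · funext u
    have hsum : ∀ u : V ⊕ P × Fin k,
        (lap G' *ᵥ Sum.elim x (0 : P × Fin k → ℝ)) u
          = ∑ b : V, lap G' u (Sum.inl b) * x b := by
      intro u
      rw [Matrix.mulVec, dotProduct, Fintype.sum_sum_type]
      simp
    cases u with
    | inl a =>
      rw [hsum]
      have hentry : ∀ b : V, lap G' (Sum.inl a) (Sum.inl b)
          = (if a = b then (G'.degree (Sum.inl a) : ℝ) else 0)
            + (if G.Adj a b then -1 else 0) := by
        intro b
        simp only [lap, Matrix.of_apply, Sum.inl.injEq, hll]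
        by_cases h : a = b
        · subst h; simp [G.irrefl]
        · simp [h]
      have hentryG : ∀ b : V, lap G a b
          = (if a = b then (G.degree a : ℝ) else 0)
            + (if G.Adj a b then -1 else 0) := by
        intro b
        simp only [lap, Matrix.of_apply]
        by_cases h : a = b
        · subst h; simp [G.irrefl]
        · simp [h]
      have hG : ((G.degree a : ℝ)) * x a
          + ∑ b, (if G.Adj a b then (-1 : ℝ) else 0) * x b = lam * x a := by
        have h0 := congrFun heig a
        rw [Matrix.mulVec, dotProduct] at h0
        simp only [Pi.smul_apply, smul_eq_mul] at h0
        rw [← split_sum a (G.degree a : ℝ) (fun b => if G.Adj a b then (-1 : ℝ) else 0) x]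
        rw [← h0]
        exact Finset.sum_congr rfl fun b _ => by rw [← hentryG]
      have hS : ∑ b : V, lap G' (Sum.inl a) (Sum.inl b) * x b
          = (G'.degree (Sum.inl a) : ℝ) * x a
            + ∑ b, (if G.Adj a b then (-1 : ℝ) else 0) * x b := by
        rw [← split_sum a (G'.degree (Sum.inl a) : ℝ)
          (fun b => if G.Adj a b then (-1 : ℝ) else 0) x]
        exact Finset.sum_congr rfl fun b _ => by rw [hentry]
      rw [hS]
      simp only [Sum.elim_inl, Pi.smul_apply, smul_eq_mul]
      by_cases hxa : x a = 0
      · rw [hxa] at hG ⊢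
        simp only [mul_zero, zero_add] at hG ⊢
        linarith
      · obtain ⟨q0, hq0⟩ := hcover a hxa
        have hdeg : (G'.degree (Sum.inl a) : ℝ) = (G.degree a : ℝ) + k := by
          have h1 : G'.degree (Sum.inl a) = G.degree a + k := by
            rw [degree_eq_sum_ite, Fintype.sum_sum_type]
            have hl : (∑ b : V, if G'.Adj (Sum.inl a) (Sum.inl b) then 1 else 0)
                = G.degree a := by
              rw [degree_eq_sum_ite]
              simp only [hll]
            have hr : (∑ p : P × Fin k, if G'.Adj (Sum.inl a) (Sum.inr p) then 1 else 0)
                = k := by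
              rw [Fintype.sum_prod_type]
              have key : ∀ q : P,
                  (∑ m : Fin k, if G'.Adj (Sum.inl a) (Sum.inr (q, m)) then 1 else 0)
                  = if q = q0 then k else 0 := by
                intro q
                by_cases hq : q = q0
                · subst hq
                  simp only [hlr, if_pos hq0, if_pos rfl]
                  simp
                · have hnot : ¬ (a = f q ∨ a = g q) := by
                    rintro (h | h) <;>
                    · rcases hq0 with h0 | h0 <;>
                      · obtain ⟨h1, h2, h3, h4⟩ := hdisj q q0 hq
                        rw [h] at h0
                        first
                        | exact h1 h0 | exact h2 h0 | exact h3 h0 | exact h4 h0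
                  simp [hlr, hnot, hq]
              rw [Finset.sum_congr rfl fun q _ => key q, Finset.sum_ite_eq']
              simp
            rw [hl, hr]
          rw [h1]; push_cast; ring
        rw [hdeg]
        linarith
    | inr p =>
      obtain ⟨q, m⟩ := p
      rw [hsum]
      have hentry : ∀ b : V, lap G' (Sum.inr (q, m)) (Sum.inl b)
          = (if b = f q then (-1 : ℝ) else 0) + (if b = g q then (-1 : ℝ) else 0) := by
        intro b
        have hadj : G'.Adj (Sum.inr (q, m)) (Sum.inl b) ↔ (b = f q ∨ b = g q) := by
          rw [SimpleGraph.adj_comm, hlr]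
        simp only [lap, Matrix.of_apply, hadj]
        by_cases h1 : b = f q
        · have h2 : b ≠ g q := by rw [h1]; exact hfg q
          simp [h1, h2, hfg q]
        · by_cases h2 : b = g q
          · simp [h1, h2, (hfg q).symm]
          · simp [h1, h2]
      rw [Finset.sum_congr rfl fun b _ => by rw [hentry b]]
      simp only [add_mul, Finset.sum_add_distrib, ite_mul, zero_mul, neg_mul, one_mul,
        Finset.sum_ite_eq', Finset.mem_univ, if_true]
      simp [hpair q]
end

section
/- (Add an alternate perfect matching) Let x be an eigenvector of L(G) for an eigenvalue λ, and let M be a set of pairwise disjoint pairs {i, j} of vertices such that: every vertex v with x_v ≠ 0 belongs to exactly one pair of M, each pair {i, j} ∈ M satisfies x_i = −x_j ≠ 0, and no pair of M is an edge of G. Then x is an eigenvector of L(G'), where G' is obtained from G by adding all pairs of M as edges, for the eigenvalue λ + 2. Dually, if every pair of M is an edge of G and G'' is obtained from G by deleting these edges, then x is an eigenvector of L(G'') for the eigenvalue λ − 2. -/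
open Matrix

/-- (Add/Delete an alternate perfect matching) Let the pairs `{f q, g q}` (indexed by `P`)
form an alternate perfect matching for `x`: they are pairwise disjoint, cover the support
of `x`, and satisfy `x (f q) = - x (g q) ≠ 0`. If no pair is an edge of `G`, then adding
all pairs as edges gives a graph for which `x` is an eigenvector for `λ + 2`; dually, if
every pair is an edge of `G`, deleting them gives an eigenvector for `λ - 2`. -/
theorem alternate_perfect_matching {V P : Type*} [Fintype V] [DecidableEq V]
    [Fintype P] [DecidableEq P]
    (G : SimpleGraph V) [DecidableRel G.Adj] (lam : ℝ) (x : V → ℝ) (hx : x ≠ 0)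
    (heig : lap G *ᵥ x = lam • x) (f g : P → V)
    (hpair : ∀ q, x (f q) = - x (g q))
    (hne : ∀ q, x (f q) ≠ 0)
    (hcover : ∀ v, x v ≠ 0 → ∃ q, v = f q ∨ v = g q)
    (hdisj : ∀ q r, q ≠ r → f q ≠ f r ∧ f q ≠ g r ∧ g q ≠ f r ∧ g q ≠ g r) :
    (∀ (_ : ∀ q, ¬ G.Adj (f q) (g q)) (G' : SimpleGraph V) [DecidableRel G'.Adj],
      (∀ a b, G'.Adj a b ↔
          (G.Adj a b ∨ ∃ q, (a = f q ∧ b = g q) ∨ (a = g q ∧ b = f q))) →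
        lap G' *ᵥ x = (lam + 2) • x) ∧
    (∀ (_ : ∀ q, G.Adj (f q) (g q)) (G'' : SimpleGraph V) [DecidableRel G''.Adj],
      (∀ a b, G''.Adj a b ↔
          (G.Adj a b ∧ ¬ ∃ q, (a = f q ∧ b = g q) ∨ (a = g q ∧ b = f q))) →
        lap G'' *ᵥ x = (lam - 2) • x) := by
  classical
  have hgne : ∀ q, x (g q) ≠ 0 := by
    intro q h
    exact hne q (by rw [hpair q, h, neg_zero])
  have hfg : ∀ q r, f q ≠ g r := by
    intro q r
    by_cases h : q = r
    · subst h
      intro he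
      have := hpair q
      rw [← he] at this
      exact hne q (by linarith)
    · exact (hdisj q r h).2.1
  -- the base eigenvector equation entrywise
  have hbase : ∀ v, (∑ w, if G.Adj v w then x v - x w else 0) = lam * x v := by
    intro v
    rw [← lap_mulVec_apply, heig]
    rfl
  -- sum over the matching-pair predicate
  have hPsum : ∀ v, (∑ w, if (∃ q, (v = f q ∧ w = g q) ∨ (v = g q ∧ w = f q))
      then x v - x w else 0) = 2 * x v := by
    intro v
    rcases eq_or_ne (x v) 0 with hv | hv
    · rw [hv, mul_zero]
      refine Finset.sum_eq_zero fun w _ => ?_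
      rw [if_neg]
      rintro ⟨q, ⟨hq, -⟩ | ⟨hq, -⟩⟩
      · exact hne q (hq ▸ hv)
      · exact hgne q (hq ▸ hv)
    · obtain ⟨q₀, hq₀⟩ := hcover v hv
      rcases hq₀ with h | h
      · have hiff : ∀ w, (∃ q, (v = f q ∧ w = g q) ∨ (v = g q ∧ w = f q)) ↔ w = g q₀ := by
          intro w
          constructor
          · rintro ⟨q, ⟨hq1, hq2⟩ | ⟨hq1, hq2⟩⟩
            · by_cases hqq : q = q₀
              · subst hqq; exact hq2
              · exact absurd (h.symm.trans hq1) ((hdisj q₀ q (Ne.symm hqq)).1)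
            · exact absurd (h.symm.trans hq1) (hfg q₀ q)
          · rintro rfl
            exact ⟨q₀, Or.inl ⟨h, rfl⟩⟩
        rw [Finset.sum_congr rfl fun w _ => by rw [show (if (∃ q, (v = f q ∧ w = g q) ∨
            (v = g q ∧ w = f q)) then x v - x w else 0) = (if w = g q₀ then x v - x w else 0)
            from by simp [hiff w]]]
        rw [Finset.sum_ite_eq' Finset.univ (g q₀) (fun w => x v - x w)]
        have : x (g q₀) = - x v := by rw [h, hpair q₀]; ring
        simp [this]
        ring
      · have hiff : ∀ w, (∃ q, (v = f q ∧ w = g q) ∨ (v = g q ∧ w = f q)) ↔ w = f q₀ := by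
          intro w
          constructor
          · rintro ⟨q, ⟨hq1, hq2⟩ | ⟨hq1, hq2⟩⟩
            · exact absurd (hq1.symm.trans h) (hfg q q₀)
            · by_cases hqq : q = q₀
              · subst hqq; exact hq2
              · exact absurd (h.symm.trans hq1) ((hdisj q₀ q (Ne.symm hqq)).2.2.2)
          · rintro rfl
            exact ⟨q₀, Or.inr ⟨h, rfl⟩⟩
        rw [Finset.sum_congr rfl fun w _ => by rw [show (if (∃ q, (v = f q ∧ w = g q) ∨
            (v = g q ∧ w = f q)) then x v - x w else 0) = (if w = f q₀ then x v - x w else 0)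
            from by simp [hiff w]]]
        rw [Finset.sum_ite_eq' Finset.univ (f q₀) (fun w => x v - x w)]
        have : x (f q₀) = - x v := by rw [h, hpair q₀]
        simp [this]
        ring
  constructor
  · intro hnadj G' instD hadj
    funext v
    rw [lap_mulVec_apply]
    have hsplit : ∀ w, (if G'.Adj v w then x v - x w else 0)
        = (if G.Adj v w then x v - x w else 0)
        + (if (∃ q, (v = f q ∧ w = g q) ∨ (v = g q ∧ w = f q)) then x v - x w else 0) := by
      intro w
      have hP : (∃ q, (v = f q ∧ w = g q) ∨ (v = g q ∧ w = f q)) → ¬ G.Adj v w := by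
        rintro ⟨q, ⟨rfl, rfl⟩ | ⟨rfl, rfl⟩⟩
        · exact hnadj q
        · exact fun h => hnadj q h.symm
      rw [if_congr (hadj v w) rfl rfl]
      by_cases hA : G.Adj v w
      · rw [if_pos (Or.inl hA), if_pos hA, if_neg (fun hp => hP hp hA), add_zero]
      · by_cases hp : ∃ q, (v = f q ∧ w = g q) ∨ (v = g q ∧ w = f q)
        · rw [if_pos (Or.inr hp), if_neg hA, if_pos hp, zero_add]
        · rw [if_neg (fun h => h.elim hA hp), if_neg hA, if_neg hp, add_zero]
    rw [Finset.sum_congr rfl fun w _ => hsplit w, Finset.sum_add_distrib, hbase, hPsum]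
    show _ = (lam + 2) * x v
    ring
  · intro hdel G'' instD hadj
    funext v
    rw [lap_mulVec_apply]
    have hsplit : ∀ w, (if G''.Adj v w then x v - x w else 0)
        = (if G.Adj v w then x v - x w else 0)
        - (if (∃ q, (v = f q ∧ w = g q) ∨ (v = g q ∧ w = f q)) then x v - x w else 0) := by
      intro w
      have hP : (∃ q, (v = f q ∧ w = g q) ∨ (v = g q ∧ w = f q)) → G.Adj v w := by
        rintro ⟨q, ⟨rfl, rfl⟩ | ⟨rfl, rfl⟩⟩
        · exact hdel q
        · exact (hdel q).symm
      rw [if_congr (hadj v w) rfl rfl]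
      by_cases hp : ∃ q, (v = f q ∧ w = g q) ∨ (v = g q ∧ w = f q)
      · rw [if_neg (fun h => h.2 hp), if_pos (hP hp), if_pos hp, sub_self]
      · by_cases hA : G.Adj v w
        · rw [if_pos ⟨hA, hp⟩, if_pos hA, if_neg hp, sub_zero]
        · rw [if_neg (fun h => hA h.1), if_neg hA, if_neg hp, sub_zero]
    rw [Finset.sum_congr rfl fun w _ => hsplit w, Finset.sum_sub_distrib, hbase, hPsum]
    show _ = (lam - 2) * x v
    ring
end

section
/- Let b be a p × p' real matrix with nonnegative entries such that every row of b has a positive sum, let a be the p × p diagonal matrix with a_{ii} = Σ_j b_{ij}, and let c be the p' × p' diagonal matrix with c_{jj} = Σ_i b_{ij}. Then the Schur complement Δ = c − bᵀ a⁻¹ b is symmetric, has nonpositive off-diagonal entries, and satisfies Δ·𝟙 = 0 where 𝟙 is the all-ones vector; that is, Δ is the Laplacian matrix of a weighted graph. -/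
open Matrix

/-- Let `b` be a nonnegative `p × p'` matrix with positive row sums, `a` the diagonal
matrix of its row sums and `c` the diagonal matrix of its column sums. Then the Schur
complement `Δ = c - bᵀ a⁻¹ b` is symmetric, has nonpositive off-diagonal entries and
kills the all-ones vector: it is the Laplacian of a weighted graph. -/
theorem schur_complement_is_weighted_laplacian (p p' : ℕ) (b : Matrix (Fin p) (Fin p') ℝ)
    (hb : ∀ i j, 0 ≤ b i j) (hrow : ∀ i, 0 < ∑ j, b i j) :
    ((Matrix.diagonal fun j => ∑ i, b i j) -
        bᵀ * (Matrix.diagonal fun i => ∑ j, b i j)⁻¹ * b).IsSymm ∧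
    (∀ u v : Fin p', u ≠ v →
      ((Matrix.diagonal fun j => ∑ i, b i j) -
        bᵀ * (Matrix.diagonal fun i => ∑ j, b i j)⁻¹ * b) u v ≤ 0) ∧
    ((Matrix.diagonal fun j => ∑ i, b i j) -
        bᵀ * (Matrix.diagonal fun i => ∑ j, b i j)⁻¹ * b) *ᵥ (fun _ => (1 : ℝ)) = 0 := by
  set d : Fin p → ℝ := fun i => ∑ j, b i j with hd
  have hdpos : ∀ i, 0 < d i := hrow
  have hinv : (Matrix.diagonal d)⁻¹ = Matrix.diagonal fun i => (d i)⁻¹ := by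
    refine Matrix.inv_eq_right_inv ?_
    rw [Matrix.diagonal_mul_diagonal]
    convert Matrix.diagonal_one with i
    exact mul_inv_cancel₀ (hdpos i).ne'
  have hent : ∀ u v, (bᵀ * (Matrix.diagonal d)⁻¹ * b) u v
      = ∑ i, b i u * (d i)⁻¹ * b i v := by
    intro u v
    rw [hinv, Matrix.mul_apply]
    refine Finset.sum_congr rfl fun i _ => ?_
    rw [Matrix.mul_diagonal, Matrix.transpose_apply]
  refine ⟨?_, ?_, ?_⟩
  · ext u v
    simp only [Matrix.transpose_apply, Matrix.sub_apply, hent]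
    rw [Matrix.diagonal_apply, Matrix.diagonal_apply]
    congr 1
    · by_cases h : u = v <;> simp [h, eq_comm]
    · exact Finset.sum_congr rfl fun i _ => by ring
  · intro u v huv
    simp only [Matrix.sub_apply, hent, Matrix.diagonal_apply_ne _ huv]
    have : 0 ≤ ∑ i, b i u * (d i)⁻¹ * b i v :=
      Finset.sum_nonneg fun i _ =>
        mul_nonneg (mul_nonneg (hb i u) (inv_nonneg.2 (hdpos i).le)) (hb i v)
    linarith
  · funext u
    simp only [Matrix.mulVec, Matrix.sub_apply, dotProduct, mul_one, Pi.zero_apply]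
    rw [Finset.sum_sub_distrib]
    have h1 : ∑ v, (Matrix.diagonal fun j => ∑ i, b i j) u v = ∑ i, b i u := by
      rw [Finset.sum_eq_single u] <;>
        simp (config := { contextual := true }) [Matrix.diagonal_apply_ne']
    have h2 : ∑ v, (bᵀ * (Matrix.diagonal d)⁻¹ * b) u v = ∑ i, b i u := by
      simp only [hent]
      rw [Finset.sum_comm]
      refine Finset.sum_congr rfl fun i _ => ?_
      rw [← Finset.mul_sum, show (∑ x, b i x) = d i from rfl, mul_assoc,
        inv_mul_cancel₀ (hdpos i).ne', mul_one]
    rw [h1, h2, sub_self]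
end
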